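/- Define f₁(ℓ) = 1 − (ℓ²+ℓ)/|GL₂(ℤ/ℓℤ)| and f₂(ℓ) = 1 − ℓ/|GL₂(ℤ/ℓℤ)|. For a positive integer n, define F(n) = (1/φ(n)) · Σ over k ∈ (ℤ/nℤ)ˣ of [∏_{ℓ|n, k≢1 mod ℓ} f₁(ℓ) · ∏_{ℓ|n, k≡1 mod ℓ} f₂(ℓ)]. Then F(n) = ∏_{ℓ|n} (1 − (ℓ²−ℓ−1)/((ℓ−1)³(ℓ+1))). -/

import Mathlib

open Finset

private lemma cardGL {ℓ : ℕ} (hℓ : ℓ.Prime) :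
    (Nat.card (GL (Fin 2) (ZMod ℓ)) : ℚ) = ((ℓ:ℚ)^2 - 1) * ((ℓ:ℚ)^2 - ℓ) := by
  haveI := Fact.mk hℓ
  rw [Matrix.card_GL_field, Fin.prod_univ_two]
  simp only [ZMod.card]
  have h1 : 1 ≤ ℓ ^ 2 := Nat.one_le_pow _ _ hℓ.pos
  have h2 : ℓ ≤ ℓ ^ 2 := by nlinarith [hℓ.two_le]
  simp only [Fin.isValue, Fin.val_zero, Fin.val_one, pow_zero, pow_one]
  rw [Nat.cast_mul, Nat.cast_sub h1, Nat.cast_sub h2]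
  push_cast
  ring

private lemma card_Icc_filter (n : ℕ) [NeZero n] (P : ZMod n → Prop) [DecidablePred P] :
    ((Finset.Icc 1 n).filter fun k => P ((k : ℕ) : ZMod n)).card = (Finset.univ.filter P).card := by
  have hn : 0 < n := Nat.pos_of_ne_zero (NeZero.ne n)
  refine Finset.card_bij (fun k _ => ((k : ℕ) : ZMod n)) ?_ ?_ ?_
  · intro a ha
    simp only [mem_filter, mem_univ, true_and] at ha ⊢
    exact ha.2
  · intro a ha b hb hab
    simp only [mem_filter, mem_Icc] at ha hb
    have h := (ZMod.natCast_eq_natCast_iff a b n).mp hab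
    unfold Nat.ModEq at h
    rcases eq_or_lt_of_le ha.1.2 with h1 | h1 <;> rcases eq_or_lt_of_le hb.1.2 with h2 | h2
    · omega
    · rw [h1, Nat.mod_self, Nat.mod_eq_of_lt h2] at h; omega
    · rw [h2, Nat.mod_self, Nat.mod_eq_of_lt h1] at h; omega
    · rw [Nat.mod_eq_of_lt h1, Nat.mod_eq_of_lt h2] at h; omega
  · intro x hx
    simp only [mem_filter, mem_univ, true_and] at hx
    by_cases h0 : x = 0
    · exact ⟨n, by simp [mem_filter, mem_Icc, hn, Nat.one_le_iff_ne_zero.mpr hn.ne', ZMod.natCast_self, h0 ▸ hx],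
        by simp [ZMod.natCast_self, h0]⟩
    · refine ⟨x.val, ?_, ?_⟩
      · have hv : (x.val : ZMod n) = x := by simp [ZMod.natCast_val, ZMod.cast_id]
        have hne : x.val ≠ 0 := fun h => h0 (by rwa [ZMod.val_eq_zero] at h)
        simp only [mem_filter, mem_Icc]
        exact ⟨⟨Nat.one_le_iff_ne_zero.mpr hne, (ZMod.val_lt x).le⟩, by rw [hv]; exact hx⟩
      · simp [ZMod.natCast_val, ZMod.cast_id]

private lemma count_lemma (n m : ℕ) (hn : 0 < n) (hm : m ∣ n) :
    (((Finset.Icc 1 n).filter fun k => Nat.Coprime k n ∧ (k : ZMod m) = 1).card) * m.totient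
      = n.totient := by
  classical
  haveI : NeZero n := ⟨hn.ne'⟩
  haveI : NeZero m := ⟨fun h => hn.ne' (Nat.eq_zero_of_zero_dvd (h ▸ hm))⟩
  have e1 : ((Finset.Icc 1 n).filter fun k => Nat.Coprime k n ∧ (k : ZMod m) = 1)
      = ((Finset.Icc 1 n).filter fun k =>
          (fun x : ZMod n => IsUnit x ∧ ZMod.castHom hm (ZMod m) x = 1) ((k : ℕ) : ZMod n)) := by
    apply Finset.filter_congr
    intro k _
    simp only
    rw [ZMod.isUnit_iff_coprime, map_natCast]
  have ecard := card_Icc_filter n (fun x : ZMod n => IsUnit x ∧ ZMod.castHom hm (ZMod m) x = 1)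
  rw [e1, ecard]
  have e2 : (Finset.univ.filter fun x : ZMod n => IsUnit x ∧ ZMod.castHom hm (ZMod m) x = 1).card
      = (Finset.univ.filter fun u : (ZMod n)ˣ => ZMod.unitsMap hm u = 1).card := by
    symm
    refine Finset.card_bij (fun u _ => ((u : (ZMod n)ˣ) : ZMod n)) ?_ ?_ ?_
    · intro u hu
      simp only [mem_filter, mem_univ, true_and] at hu ⊢
      refine ⟨Units.isUnit u, ?_⟩
      have := congrArg (Units.val) hu
      rwa [ZMod.unitsMap_def, Units.coe_map, Units.val_one] at this
    · intro a _ b _ h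
      exact Units.ext h
    · intro x hx
      simp only [mem_filter, mem_univ, true_and] at hx
      refine ⟨hx.1.unit, ?_, hx.1.unit_spec⟩
      simp only [mem_filter, mem_univ, true_and]
      apply Units.ext
      rw [ZMod.unitsMap_def, Units.coe_map, Units.val_one]
      simp only [RingHom.toMonoidHom_eq_coe, MonoidHom.coe_coe]
      rw [hx.1.unit_spec]
      exact hx.2
  rw [e2]
  have e3 : (Finset.univ.filter fun u : (ZMod n)ˣ => ZMod.unitsMap hm u = 1).card
      = Nat.card (MonoidHom.ker (ZMod.unitsMap hm)) := by
    rw [Nat.card_eq_fintype_card, Fintype.card_subtype]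
    apply Finset.card_bij (fun u _ => u) <;> simp [MonoidHom.mem_ker]
  rw [e3]
  have h1 := Subgroup.card_eq_card_quotient_mul_card_subgroup (MonoidHom.ker (ZMod.unitsMap hm))
  have h2 : Nat.card ((ZMod n)ˣ ⧸ MonoidHom.ker (ZMod.unitsMap hm)) = Nat.card (ZMod m)ˣ :=
    Nat.card_congr (QuotientGroup.quotientKerEquivOfSurjective _
      (ZMod.unitsMap_surjective hm)).toEquiv
  rw [h2] at h1
  have h3 : Nat.card (ZMod n)ˣ = n.totient := by
    rw [Nat.card_eq_fintype_card, ZMod.card_units_eq_totient]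
  have h4 : Nat.card (ZMod m)ˣ = m.totient := by
    rw [Nat.card_eq_fintype_card, ZMod.card_units_eq_totient]
  rw [h3, h4] at h1
  rw [h1, Nat.mul_comm]

private lemma totient_prod_primes (S : Finset ℕ) (hS : ∀ p ∈ S, p.Prime) :
    (∏ p ∈ S, p).totient = ∏ p ∈ S, (p - 1) := by
  induction S using Finset.induction with
  | empty => simp
  | @insert a s ha ih =>
    have hap : a.Prime := hS a (mem_insert_self a s)
    have hcop : Nat.Coprime a (∏ p ∈ s, p) := by
      apply Nat.Coprime.prod_right
      intro p hp
      exact (Nat.coprime_primes hap (hS p (mem_insert_of_mem hp))).mpr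
        (fun h => ha (h ▸ hp))
    rw [prod_insert ha, Nat.totient_mul hcop, prod_insert ha,
      ih (fun p hp => hS p (mem_insert_of_mem hp)), Nat.totient_prime hap]

private lemma cast_one_iff (k : ℕ) (hk : 1 ≤ k) (S : Finset ℕ) (hS : ∀ p ∈ S, p.Prime) :
    ((k : ZMod (∏ p ∈ S, p)) = 1) ↔ ∀ ℓ ∈ S, (k : ZMod ℓ) = 1 := by
  have key : ∀ m : ℕ, ((k : ZMod m) = 1 ↔ m ∣ k - 1) := by
    intro m
    rw [show (1 : ZMod m) = ((1:ℕ) : ZMod m) by simp, ZMod.natCast_eq_natCast_iff]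
    exact ⟨fun h => (Nat.modEq_iff_dvd' hk).mp h.symm,
      fun h => ((Nat.modEq_iff_dvd' hk).mpr h).symm⟩
  simp only [key]
  constructor
  · intro h ℓ hℓ
    exact dvd_trans (Finset.dvd_prod_of_mem _ hℓ) h
  · intro h
    exact Finset.prod_primes_dvd _ (fun p hp => (hS p hp).prime) h

private lemma cardGL_ne {ℓ : ℕ} (hℓ : ℓ.Prime) :
    (Nat.card (GL (Fin 2) (ZMod ℓ)) : ℚ) ≠ 0 := by
  rw [cardGL hℓ]
  have h2 : (2:ℚ) ≤ (ℓ:ℚ) := by exact_mod_cast hℓ.two_le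
  have hA : (0:ℚ) < (ℓ:ℚ)^2 - 1 := by nlinarith
  have hB : (0:ℚ) < (ℓ:ℚ)^2 - ℓ := by nlinarith
  exact (mul_pos hA hB).ne'
/-- The average over `k ∈ (ℤ/nℤ)ˣ` of
`∏_{ℓ∣n, k≢1(ℓ)} (1 − (ℓ²+ℓ)/|GL₂(ℤ/ℓℤ)|) · ∏_{ℓ∣n, k≡1(ℓ)} (1 − ℓ/|GL₂(ℤ/ℓℤ)|)`
equals `∏_{ℓ∣n} (1 − (ℓ²−ℓ−1)/((ℓ−1)³(ℓ+1)))`. -/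
theorem stmt11 (n : ℕ) (hn : 0 < n) :
    (1 / (Nat.totient n : ℚ)) *
      ∑ k ∈ (Finset.Icc 1 n).filter (fun k => Nat.Coprime k n),
        ((∏ ℓ ∈ n.primeFactors.filter (fun ℓ => ¬ (k : ZMod ℓ) = 1),
            (1 - ((ℓ : ℚ) ^ 2 + ℓ) / (Nat.card (GL (Fin 2) (ZMod ℓ)) : ℚ))) *
          ∏ ℓ ∈ n.primeFactors.filter (fun ℓ => (k : ZMod ℓ) = 1),
            (1 - (ℓ : ℚ) / (Nat.card (GL (Fin 2) (ZMod ℓ)) : ℚ))) =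
      ∏ ℓ ∈ n.primeFactors,
        (1 - ((ℓ : ℚ) ^ 2 - ℓ - 1) / (((ℓ : ℚ) - 1) ^ 3 * ((ℓ : ℚ) + 1))) := by
  classical
  haveI : NeZero n := ⟨hn.ne'⟩
  have hprime : ∀ ℓ ∈ n.primeFactors, ℓ.Prime := fun ℓ h => Nat.prime_of_mem_primeFactors h
  have hφ : (Nat.totient n : ℚ) ≠ 0 := by
    exact_mod_cast (Nat.totient_pos.mpr hn).ne'
  -- step 1: rewrite each summand via prod_add
  have step1 : ∀ k ∈ (Finset.Icc 1 n).filter (fun k => Nat.Coprime k n),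
      ((∏ ℓ ∈ n.primeFactors.filter (fun ℓ => ¬ (k : ZMod ℓ) = 1),
          (1 - ((ℓ : ℚ) ^ 2 + ℓ) / (Nat.card (GL (Fin 2) (ZMod ℓ)) : ℚ))) *
        ∏ ℓ ∈ n.primeFactors.filter (fun ℓ => (k : ZMod ℓ) = 1),
          (1 - (ℓ : ℚ) / (Nat.card (GL (Fin 2) (ZMod ℓ)) : ℚ)))
      = ∑ t ∈ n.primeFactors.powerset,
          (∏ ℓ ∈ t, (if (k : ZMod ℓ) = 1 then
              (ℓ:ℚ)^2 / (Nat.card (GL (Fin 2) (ZMod ℓ)) : ℚ) else 0)) *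
            ∏ ℓ ∈ n.primeFactors \ t,
              (1 - ((ℓ : ℚ) ^ 2 + ℓ) / (Nat.card (GL (Fin 2) (ZMod ℓ)) : ℚ)) := by
    intro k _
    calc (∏ ℓ ∈ n.primeFactors.filter (fun ℓ => ¬ (k : ZMod ℓ) = 1),
            (1 - ((ℓ : ℚ) ^ 2 + ℓ) / (Nat.card (GL (Fin 2) (ZMod ℓ)) : ℚ))) *
          ∏ ℓ ∈ n.primeFactors.filter (fun ℓ => (k : ZMod ℓ) = 1),
            (1 - (ℓ : ℚ) / (Nat.card (GL (Fin 2) (ZMod ℓ)) : ℚ))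
        = ∏ ℓ ∈ n.primeFactors, (if (k : ZMod ℓ) = 1 then
              (1 - (ℓ:ℚ) / (Nat.card (GL (Fin 2) (ZMod ℓ)) : ℚ))
            else (1 - ((ℓ:ℚ)^2 + ℓ) / (Nat.card (GL (Fin 2) (ZMod ℓ)) : ℚ))) := by
          rw [Finset.prod_ite]; exact mul_comm _ _
      _ = ∏ ℓ ∈ n.primeFactors, ((if (k : ZMod ℓ) = 1 then
              (ℓ:ℚ)^2 / (Nat.card (GL (Fin 2) (ZMod ℓ)) : ℚ) else 0)
            + (1 - ((ℓ:ℚ)^2 + ℓ) / (Nat.card (GL (Fin 2) (ZMod ℓ)) : ℚ))) := by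
          refine Finset.prod_congr rfl fun ℓ hℓ => ?_
          have hG := cardGL_ne (hprime ℓ hℓ)
          split_ifs with h
          · field_simp
            ring
          · ring
      _ = _ := Finset.prod_add _ _ _
  rw [Finset.sum_congr rfl step1, Finset.sum_comm]
  -- inner sum evaluation
  have inner : ∀ t ∈ n.primeFactors.powerset,
      (∑ k ∈ (Finset.Icc 1 n).filter (fun k => Nat.Coprime k n),
        (∏ ℓ ∈ t, (if (k : ZMod ℓ) = 1 then
            (ℓ:ℚ)^2 / (Nat.card (GL (Fin 2) (ZMod ℓ)) : ℚ) else 0)) *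
          ∏ ℓ ∈ n.primeFactors \ t,
            (1 - ((ℓ : ℚ) ^ 2 + ℓ) / (Nat.card (GL (Fin 2) (ZMod ℓ)) : ℚ)))
      = (Nat.totient n : ℚ) *
          ((∏ ℓ ∈ t, ((ℓ:ℚ)^2 / (Nat.card (GL (Fin 2) (ZMod ℓ)) : ℚ) / ((ℓ:ℚ) - 1))) *
          ∏ ℓ ∈ n.primeFactors \ t,
            (1 - ((ℓ : ℚ) ^ 2 + ℓ) / (Nat.card (GL (Fin 2) (ZMod ℓ)) : ℚ))) := by
    intro t ht
    rw [Finset.mem_powerset] at ht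
    have htp : ∀ p ∈ t, p.Prime := fun p hp => hprime p (ht hp)
    have e1 : ∀ k ∈ (Finset.Icc 1 n).filter (fun k => Nat.Coprime k n),
        (∏ ℓ ∈ t, (if (k : ZMod ℓ) = 1 then
            (ℓ:ℚ)^2 / (Nat.card (GL (Fin 2) (ZMod ℓ)) : ℚ) else 0)) *
          ∏ ℓ ∈ n.primeFactors \ t,
            (1 - ((ℓ : ℚ) ^ 2 + ℓ) / (Nat.card (GL (Fin 2) (ZMod ℓ)) : ℚ))
        = if ∀ ℓ ∈ t, (k : ZMod ℓ) = 1 then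
            (∏ ℓ ∈ t, (ℓ:ℚ)^2 / (Nat.card (GL (Fin 2) (ZMod ℓ)) : ℚ)) *
            ∏ ℓ ∈ n.primeFactors \ t,
              (1 - ((ℓ : ℚ) ^ 2 + ℓ) / (Nat.card (GL (Fin 2) (ZMod ℓ)) : ℚ))
          else 0 := by
      intro k _
      rw [Finset.prod_ite_zero, ite_mul, zero_mul]
    rw [Finset.sum_congr rfl e1, ← Finset.sum_filter, Finset.sum_const, nsmul_eq_mul]
    -- compute the cardinality
    have hdvd : (∏ p ∈ t, p) ∣ n :=
      Finset.prod_primes_dvd n (fun p hp => (htp p hp).prime)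
        (fun p hp => Nat.dvd_of_mem_primeFactors (ht hp))
    have hfilter : ((Finset.Icc 1 n).filter (fun k => Nat.Coprime k n)).filter
          (fun k => ∀ ℓ ∈ t, (k : ZMod ℓ) = 1)
        = (Finset.Icc 1 n).filter
            (fun k => Nat.Coprime k n ∧ (k : ZMod (∏ p ∈ t, p)) = 1) := by
      rw [Finset.filter_filter]
      apply Finset.filter_congr
      intro k hk
      have h1k : 1 ≤ k := (Finset.mem_Icc.mp hk).1
      simp [cast_one_iff k h1k t htp]
    have hcount := count_lemma n (∏ p ∈ t, p) hn hdvd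
    rw [totient_prod_primes t htp] at hcount
    have hTcast : ((∏ p ∈ t, (p - 1) : ℕ) : ℚ) = ∏ p ∈ t, ((p:ℚ) - 1) := by
      rw [Nat.cast_prod]
      exact Finset.prod_congr rfl fun p hp => by
        rw [Nat.cast_sub (htp p hp).one_lt.le, Nat.cast_one]
    have hTne : (∏ p ∈ t, ((p:ℚ) - 1)) ≠ 0 := by
      apply Finset.prod_ne_zero_iff.mpr
      intro p hp
      have : (2:ℚ) ≤ (p:ℚ) := by exact_mod_cast (htp p hp).two_le
      linarith
    have hcard : ((((Finset.Icc 1 n).filter (fun k => Nat.Coprime k n)).filter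
          (fun k => ∀ ℓ ∈ t, (k : ZMod ℓ) = 1)).card : ℚ)
        = (Nat.totient n : ℚ) / ∏ p ∈ t, ((p:ℚ) - 1) := by
      rw [hfilter]
      rw [eq_div_iff hTne, ← hTcast]
      exact_mod_cast hcount
    rw [hcard]
    have hsplit : (∏ ℓ ∈ t, ((ℓ:ℚ)^2 / (Nat.card (GL (Fin 2) (ZMod ℓ)) : ℚ) / ((ℓ:ℚ) - 1)))
        = (∏ ℓ ∈ t, ((ℓ:ℚ)^2 / (Nat.card (GL (Fin 2) (ZMod ℓ)) : ℚ))) / ∏ ℓ ∈ t, ((ℓ:ℚ) - 1) :=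
      Finset.prod_div_distrib _ _
    rw [hsplit]
    ring
  rw [Finset.sum_congr rfl inner, ← Finset.mul_sum, ← Finset.prod_add, ← mul_assoc,
    one_div_mul_cancel hφ, one_mul]
  -- final pointwise identity
  refine Finset.prod_congr rfl fun ℓ hℓ => ?_
  have hp := hprime ℓ hℓ
  have h2 : (2:ℚ) ≤ (ℓ:ℚ) := by exact_mod_cast hp.two_le
  have h1 : (ℓ:ℚ) - 1 ≠ 0 := by linarith
  have h3 : (ℓ:ℚ) + 1 ≠ 0 := by linarith
  have h0 : (ℓ:ℚ) ≠ 0 := by linarith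
  have hA : ((ℓ:ℚ)^2 - 1) ≠ 0 := by nlinarith
  have hB : ((ℓ:ℚ)^2 - ℓ) ≠ 0 := by nlinarith
  rw [cardGL hp]
  field_simp
  ring
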